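/- Let F ⊆ ℝ^m be nonempty closed convex, A ∈ ℝ^{m×n}, and suppose c ∈ ℝⁿ and τ ∈ ℝ^m satisfy, for some α, λ > 0: c = prox_{(1/α)‖·‖₁}(c − (λ/α)Aᵀτ) and τ = (I − P_F)(Ac + τ), where P_F is the projection onto F. Then Ac ∈ F and c minimizes ‖x‖₁ + ι_F(Ax) over x ∈ ℝⁿ. -/

import Mathlib

open scoped Matrix
open Finset Filter Topology

/-! Both fixed-point equations are first-order optimality conditions. The projection equation says
`P_F(Ac + τ) = Ac`, so `Ac ∈ F` and `τ` lies in the normal cone of `F` at `Ac`: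
`⟪τ, w - Ac⟫ ≤ 0` for `w ∈ F`. The prox equation says `-λ Aᵀτ` is a subgradient of `‖·‖₁` at `c`, so
`‖x‖₁ ≥ ‖c‖₁ - λ⟪τ, Ax - Ac⟫ ≥ ‖c‖₁` whenever `Ax ∈ F`. Both conditions come from comparing the
minimiser with points `c + t (x - c)` of a segment and letting `t → 0⁺`. -/

theorem le_of_forall_mem_Ioc_le_add_mul {a b Q : ℝ}
    (h : ∀ t ∈ Set.Ioc (0 : ℝ) 1, a ≤ b + t * Q) : a ≤ b := by
  have hlim : Tendsto (fun t : ℝ => b + t * Q) (𝓝[>] 0) (𝓝 b) := by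
    simpa using ((continuous_id.mul continuous_const).const_add b).continuousWithinAt
      (s := Set.Ioi (0 : ℝ)) (x := 0) |>.tendsto
  exact ge_of_tendsto hlim (eventually_of_mem (Ioc_mem_nhdsGT one_pos) h)

theorem convexOn_sum_abs {ι : Type*} [Fintype ι] :
    ConvexOn ℝ Set.univ (fun x : ι → ℝ => ∑ i, |x i|) := by
  refine ⟨convex_univ, fun x _ y _ a b ha hb _ => ?_⟩
  simp only [Pi.add_apply, Pi.smul_apply, smul_eq_mul, mul_sum, ← sum_add_distrib]
  gcongr with i
  calc |a * x i + b * y i| ≤ |a * x i| + |b * y i| := abs_add_le _ _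
    _ = a * |x i| + b * |y i| := by rw [abs_mul, abs_mul, abs_of_nonneg ha, abs_of_nonneg hb]

theorem sum_sq_lineMap_sub {ι : Type*} [Fintype ι] (c x z : ι → ℝ) (t : ℝ) :
    ∑ i, (c i + t * (x i - c i) - z i) ^ 2 =
      ∑ i, (c i - z i) ^ 2 - 2 * t * ((z - c) ⬝ᵥ (x - c)) + t ^ 2 * ∑ i, (x i - c i) ^ 2 := by
  simp only [dotProduct, Pi.sub_apply, mul_sum, ← sum_add_distrib, ← sum_sub_distrib]
  exact sum_congr rfl fun i _ => by ring

/-- First-order condition for the proximal step: `a • (z - c)` is a subgradient of `g` at `c`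
relative to `s`. -/
theorem IsMinOn.mul_dotProduct_le_sub {ι : Type*} [Fintype ι] {s : Set (ι → ℝ)}
    {g : (ι → ℝ) → ℝ} (hg : ConvexOn ℝ s g) {a : ℝ} {z c : ι → ℝ}
    (hmin : IsMinOn (fun y => a / 2 * ∑ i, (y i - z i) ^ 2 + g y) s c) (hc : c ∈ s)
    {x : ι → ℝ} (hx : x ∈ s) : a * ((z - c) ⬝ᵥ (x - c)) ≤ g x - g c := by
  set Q := a / 2 * ∑ i, (x i - c i) ^ 2
  refine le_of_forall_mem_Ioc_le_add_mul (Q := Q) fun t ⟨ht0, ht1⟩ => ?_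
  have hseg : c + t • (x - c) = (1 - t) • c + t • x := by module
  have hmem : c + t • (x - c) ∈ s := hseg ▸ hg.1 hc hx (by linarith) ht0.le (by ring)
  have hconv : g (c + t • (x - c)) ≤ (1 - t) * g c + t * g x :=
    hseg ▸ hg.2 hc hx (by linarith) ht0.le (by ring)
  have hle : a / 2 * ∑ i, (c i - z i) ^ 2 + g c ≤
      a / 2 * ∑ i, ((c + t • (x - c)) i - z i) ^ 2 + g (c + t • (x - c)) := hmin hmem
  rw [show ∑ i, ((c + t • (x - c)) i - z i) ^ 2 = _ from sum_sq_lineMap_sub c x z t] at hle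
  refine le_of_mul_le_mul_left ?_ ht0
  linear_combination hle + hconv

theorem dotProduct_sub_sub_nonpos_of_forall_sum_sq_le {ι : Type*} [Fintype ι]
    {s : Set (ι → ℝ)} (hs : Convex ℝ s) {u p : ι → ℝ} (hp : p ∈ s)
    (hmin : ∀ w ∈ s, ∑ i, (u i - p i) ^ 2 ≤ ∑ i, (u i - w i) ^ 2) {w : ι → ℝ} (hw : w ∈ s) :
    (u - p) ⬝ᵥ (w - p) ≤ 0 := by
  have hflip (y : ι → ℝ) : ∑ i, (y i - u i) ^ 2 = ∑ i, (u i - y i) ^ 2 :=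
    sum_congr rfl fun i _ => sub_sq_comm _ _
  have hproj : IsMinOn (fun y => 2 / 2 * ∑ i, (y i - u i) ^ 2 + 0) s p :=
    isMinOn_iff.2 fun y hy => by simp only [hflip]; linarith [hmin y hy]
  have h := hproj.mul_dotProduct_le_sub (convexOn_const 0 hs) hp hw
  linarith

theorem prox_system_fixed_point_solves_model_general (m n : ℕ)
    (F : Set (Fin m → ℝ)) (hcv : Convex ℝ F)
    (A : Matrix (Fin m) (Fin n) ℝ) (α lam : ℝ) (hα : 0 < α) (hlam : 0 < lam)
    (P : (Fin m → ℝ) → (Fin m → ℝ))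
    (hP : ∀ u, P u ∈ F ∧ ∀ w ∈ F, ∑ i, (u i - P u i) ^ 2 ≤ ∑ i, (u i - w i) ^ 2)
    (c : Fin n → ℝ) (τ : Fin m → ℝ)
    (hc : ∀ w : Fin n → ℝ,
      (α / 2) * (∑ j, (c j - (c j - (lam / α) * (Aᵀ *ᵥ τ) j)) ^ 2) + ∑ j, |c j| ≤
      (α / 2) * (∑ j, (w j - (c j - (lam / α) * (Aᵀ *ᵥ τ) j)) ^ 2) + ∑ j, |w j|)
    (hτ : τ = (A *ᵥ c + τ) - P (A *ᵥ c + τ)) :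
    A *ᵥ c ∈ F ∧ ∀ x : Fin n → ℝ, A *ᵥ x ∈ F → ∑ j, |c j| ≤ ∑ j, |x j| := by
  have hPAc : P (A *ᵥ c + τ) = A *ᵥ c := by linear_combination hτ
  have hAcF : A *ᵥ c ∈ F := hPAc ▸ (hP _).1
  have hnormal (w : Fin m → ℝ) (hw : w ∈ F) : τ ⬝ᵥ (w - A *ᵥ c) ≤ 0 := by
    have hproj := (hP (A *ᵥ c + τ)).2
    rw [hPAc] at hproj
    simpa using dotProduct_sub_sub_nonpos_of_forall_sum_sq_le hcv hAcF hproj hw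
  refine ⟨hAcF, fun x hx => ?_⟩
  have hprox := (isMinOn_univ_iff.2 hc).mul_dotProduct_le_sub convexOn_sum_abs
    (Set.mem_univ c) (Set.mem_univ x)
  have hgrad : (fun j => c j - lam / α * (Aᵀ *ᵥ τ) j) - c = -(lam / α) • (Aᵀ *ᵥ τ) := by
    ext j; simp
  rw [hgrad, smul_dotProduct, dotProduct_comm, Matrix.dotProduct_transpose_mulVec, Matrix.mulVec_sub, smul_eq_mul,
    ← mul_assoc, mul_neg, mul_div_cancel₀ lam hα.ne'] at hprox
  have hdescent : 0 ≤ -lam * (τ ⬝ᵥ (A *ᵥ x - A *ᵥ c)) :=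
    mul_nonneg_of_nonpos_of_nonpos (neg_nonpos.2 hlam.le) (hnormal _ hx)
  linarith

/-- Fixed points of the proximity-operator system solve the model: if
`c = prox_{(1/α)‖·‖₁}(c − (λ/α)Aᵀτ)` and `τ = (I − P_F)(Ac + τ)` for the
metric projection `P` onto a nonempty closed convex `F`, then `Ac ∈ F`
and `c` minimizes `‖x‖₁ + ι_F(Ax)`, i.e. `c` minimizes `‖·‖₁` among all
`x` with `Ax ∈ F`. -/
theorem prox_system_fixed_point_solves_model (m n : ℕ)
    (F : Set (Fin m → ℝ)) (hne : F.Nonempty) (hcl : IsClosed F) (hcv : Convex ℝ F)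
    (A : Matrix (Fin m) (Fin n) ℝ) (α lam : ℝ) (hα : 0 < α) (hlam : 0 < lam)
    (P : (Fin m → ℝ) → (Fin m → ℝ))
    (hP : ∀ u, P u ∈ F ∧ ∀ w ∈ F, ∑ i, (u i - P u i) ^ 2 ≤ ∑ i, (u i - w i) ^ 2)
    (c : Fin n → ℝ) (τ : Fin m → ℝ)
    (hc : ∀ w : Fin n → ℝ,
      (α / 2) * (∑ j, (c j - (c j - (lam / α) * (Aᵀ *ᵥ τ) j)) ^ 2) + ∑ j, |c j| ≤
      (α / 2) * (∑ j, (w j - (c j - (lam / α) * (Aᵀ *ᵥ τ) j)) ^ 2) + ∑ j, |w j|)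
    (hτ : τ = (A *ᵥ c + τ) - P (A *ᵥ c + τ)) :
    A *ᵥ c ∈ F ∧ ∀ x : Fin n → ℝ, A *ᵥ x ∈ F → ∑ j, |c j| ≤ ∑ j, |x j| :=
  prox_system_fixed_point_solves_model_general m n F hcv A α lam hα hlam P hP c τ hc hτ
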